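/- Let W, W̃ ∈ ℂ^{n×n} and ε ∈ (0,1). (1) If W̃ is a min ε-approximation of W, then W̃ is a complex ε/(1 − ε/2)-approximation of W. (2) If W̃ is a complex ε-approximation of W, then W̃ is a min ε/(1 − ε)-approximation of W. -/

import Mathlib

open Matrix

noncomputable section

/-- The sesquilinear form `x* A y`. -/
def sesq {m : Type*} [Fintype m] (A : Matrix m m ℂ) (x y : m → ℂ) : ℂ :=
  star x ⬝ᵥ (A *ᵥ y)

/-- The squared Euclidean norm of a complex vector. -/
def vnormSq {m : Type*} [Fintype m] (x : m → ℂ) : ℝ :=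
  ∑ i, Complex.normSq (x i)

/-- The symmetrization `U_A = (A + A*)/2` of a complex square matrix. -/
def csym {m : Type*} [Fintype m] (A : Matrix m m ℂ) : Matrix m m ℂ :=
  (1 / 2 : ℂ) • (A + Aᴴ)

/-- `W̃` is a *complex ε-approximation* of `W`. -/
def ComplexApprox {m : Type*} [Fintype m] (ε : ℝ) (W Wt : Matrix m m ℂ) : Prop :=
  ∀ x y : m → ℂ,
    ‖sesq (W - Wt) x y‖ ≤
      ε / 2 * (vnormSq x + vnormSq y - (sesq W x x + sesq W y y).re)

/-- `W̃` is a *min ε-approximation* of `W`: for all `x, y`,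
`|x*(W − W̃)y| ≤ (ε/2)·min{x*U_{I−W}x + y*U_{I−W̃}y, y*U_{I−W}y + x*U_{I−W̃}x}`. -/
def MinApprox {m : Type*} [Fintype m] [DecidableEq m] (ε : ℝ) (W Wt : Matrix m m ℂ) : Prop :=
  ∀ x y : m → ℂ,
    ‖sesq (W - Wt) x y‖ ≤
      ε / 2 *
        min ((sesq (csym (1 - W)) x x).re + (sesq (csym (1 - Wt)) y y).re)
          ((sesq (csym (1 - W)) y y).re + (sesq (csym (1 - Wt)) x x).re)

/-! For `Q_A(x) = ‖x‖² − Re x*Ax = Re x*U_{I−A}x`, a complex ε-approximation bounds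
`|x*(W − W̃)y|` by `ε/2·(Q_W(x) + Q_W(y))` and a min ε-approximation by
`ε/2·min(Q_W(x) + Q_W̃(y), Q_W(y) + Q_W̃(x))`. Since `Q_W̃(x) − Q_W(x) = Re x*(W − W̃)x`,
either bound taken at `y = x` compares `Q_W̃` with `Q_W` up to a factor `1 ± O(ε)`, which
converts one bound into the other. -/

section

variable {m : Type*} [Fintype m]

def defectForm (A : Matrix m m ℂ) (x : m → ℂ) : ℝ :=
  vnormSq x - (sesq A x x).re

lemma sesq_conjTranspose_self (A : Matrix m m ℂ) (x : m → ℂ) :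
    sesq Aᴴ x x = star (sesq A x x) := by
  simp only [sesq, dotProduct, mulVec, conjTranspose_apply, star_sum, star_mul', Pi.star_apply,
    Finset.mul_sum]
  rw [Finset.sum_comm]
  simp [mul_comm, mul_left_comm]

lemma sesq_sub (A B : Matrix m m ℂ) (x y : m → ℂ) :
    sesq (A - B) x y = sesq A x y - sesq B x y := by
  simp [sesq, sub_mulVec, dotProduct_sub]

lemma sesq_zero_right (A : Matrix m m ℂ) (x : m → ℂ) : sesq A x 0 = 0 := by
  simp [sesq]

lemma defectForm_zero (A : Matrix m m ℂ) : defectForm A 0 = 0 := by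
  simp [defectForm, vnormSq, sesq]

lemma defectForm_eq_add_re_sesq_sub (A B : Matrix m m ℂ) (x : m → ℂ) :
    defectForm B x = defectForm A x + (sesq (A - B) x x).re := by
  rw [defectForm, defectForm, sesq_sub, Complex.sub_re]
  ring

lemma complexApprox_iff {ε : ℝ} {W Wt : Matrix m m ℂ} :
    ComplexApprox ε W Wt ↔
      ∀ x y, ‖sesq (W - Wt) x y‖ ≤ ε / 2 * (defectForm W x + defectForm W y) := by
  refine forall₂_congr fun x y => ?_
  rw [show vnormSq x + vnormSq y - (sesq W x x + sesq W y y).re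
      = defectForm W x + defectForm W y by rw [defectForm, defectForm, Complex.add_re]; ring]

lemma ComplexApprox.defectForm_nonneg {ε : ℝ} {W Wt : Matrix m m ℂ} (hε : 0 < ε)
    (h : ComplexApprox ε W Wt) (x : m → ℂ) : 0 ≤ defectForm W x := by
  have hx0 := complexApprox_iff.mp h x 0
  rw [sesq_zero_right, norm_zero, defectForm_zero, add_zero] at hx0
  exact nonneg_of_mul_nonneg_right hx0 (half_pos hε)

lemma ComplexApprox.one_sub_mul_defectForm_le {ε : ℝ} {W Wt : Matrix m m ℂ}
    (h : ComplexApprox ε W Wt) (x : m → ℂ) : (1 - ε) * defectForm W x ≤ defectForm Wt x := by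
  have hxx := complexApprox_iff.mp h x x
  have hre := neg_le_of_abs_le (Complex.abs_re_le_norm (sesq (W - Wt) x x))
  rw [defectForm_eq_add_re_sesq_sub W Wt]
  linarith

variable [DecidableEq m]

lemma sesq_one_self (x : m → ℂ) : sesq (1 : Matrix m m ℂ) x x = vnormSq x := by
  simp [sesq, vnormSq, dotProduct, Complex.normSq_eq_conj_mul_self]

lemma re_sesq_csym_one_sub (A : Matrix m m ℂ) (x : m → ℂ) :
    (sesq (csym (1 - A)) x x).re = defectForm A x := by
  have hsym : sesq (csym (1 - A)) x x = (1 / 2 : ℂ) * (sesq (1 - A) x x + sesq (1 - A)ᴴ x x) := by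
    simp [sesq, csym, add_mulVec, smul_mulVec, dotProduct_add, dotProduct_smul, mul_add]
  rw [hsym, sesq_conjTranspose_self, sesq_sub, sesq_one_self, defectForm]
  simp only [Complex.mul_re, Complex.add_re, Complex.sub_re, Complex.star_def, Complex.conj_re,
    Complex.ofReal_re, Complex.add_im, Complex.sub_im, Complex.conj_im, Complex.ofReal_im]
  norm_num
  ring

lemma minApprox_iff {ε : ℝ} {W Wt : Matrix m m ℂ} :
    MinApprox ε W Wt ↔
      ∀ x y, ‖sesq (W - Wt) x y‖ ≤ ε / 2 *
        min (defectForm W x + defectForm Wt y) (defectForm W y + defectForm Wt x) := by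
  simp only [MinApprox, re_sesq_csym_one_sub]

lemma MinApprox.defectForm_le {ε : ℝ} {W Wt : Matrix m m ℂ} (h : MinApprox ε W Wt)
    (x : m → ℂ) : (1 - ε / 2) * defectForm Wt x ≤ (1 + ε / 2) * defectForm W x := by
  have hxx := minApprox_iff.mp h x x
  rw [min_self] at hxx
  have hre := le_of_abs_le (Complex.abs_re_le_norm (sesq (W - Wt) x x))
  rw [defectForm_eq_add_re_sesq_sub W Wt] at hxx ⊢
  linarith

theorem MinApprox.complexApprox {ε : ℝ} {W Wt : Matrix m m ℂ} (hε₀ : 0 ≤ ε) (hε₂ : ε < 2)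
    (h : MinApprox ε W Wt) : ComplexApprox (ε / (1 - ε / 2)) W Wt := by
  have hpos : 0 < 1 - ε / 2 := by linarith
  have hWt : ∀ x, defectForm Wt x ≤ (1 + ε / 2) / (1 - ε / 2) * defectForm W x := fun x => by
    rw [div_mul_eq_mul_div, le_div_iff₀ hpos, mul_comm]
    exact h.defectForm_le x
  refine complexApprox_iff.mpr fun x y => ?_
  set Q := defectForm W
  set Qt := defectForm Wt
  calc ‖sesq (W - Wt) x y‖
      ≤ ε / 2 * min (Q x + Qt y) (Q y + Qt x) := minApprox_iff.mp h x y
    _ ≤ ε / 2 * (((Q x + Qt y) + (Q y + Qt x)) / 2) := by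
        gcongr
        linarith [min_le_left (Q x + Qt y) (Q y + Qt x), min_le_right (Q x + Qt y) (Q y + Qt x)]
    _ = ε / 4 * ((Q x + Q y) + (Qt x + Qt y)) := by ring
    _ ≤ ε / 4 * ((Q x + Q y) + (1 + ε / 2) / (1 - ε / 2) * (Q x + Q y)) := by
        gcongr
        linarith [hWt x, hWt y]
    _ = ε / (1 - ε / 2) / 2 * (Q x + Q y) := by
        have : (2 : ℝ) - ε ≠ 0 := by linarith
        field_simp
        ring

theorem ComplexApprox.minApprox {ε : ℝ} {W Wt : Matrix m m ℂ} (hε₀ : 0 < ε) (hε₁ : ε < 1)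
    (h : ComplexApprox ε W Wt) : MinApprox (ε / (1 - ε)) W Wt := by
  have hpos : 0 < 1 - ε := by linarith
  set Q := defectForm W
  set Qt := defectForm Wt
  have hshift : ∀ u v, ε / 2 * (Q u + Q v) ≤ ε / (1 - ε) / 2 * (Q u + Qt v) := fun u v =>
    calc ε / 2 * (Q u + Q v) = ε / (1 - ε) / 2 * ((1 - ε) * (Q u + Q v)) := by
          field_simp
      _ ≤ ε / (1 - ε) / 2 * (Q u + Qt v) := by
          gcongr
          nlinarith [h.defectForm_nonneg hε₀ u, h.one_sub_mul_defectForm_le v]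
  refine minApprox_iff.mpr fun x y => ?_
  rw [mul_min_of_nonneg _ _ (by positivity)]
  refine le_min ((complexApprox_iff.mp h x y).trans (hshift x y)) ?_
  exact (complexApprox_iff.mp h x y).trans (add_comm (Q x) (Q y) ▸ hshift y x)

end

/-- For `ε ∈ (0,1)`: (1) min ε-approximation implies complex
`ε/(1 − ε/2)`-approximation; (2) complex ε-approximation implies min
`ε/(1 − ε)`-approximation. -/
theorem min_approx_vs_complex_approx {n : ℕ} (ε : ℝ) (h0 : 0 < ε) (h1 : ε < 1)
    (W Wt : Matrix (Fin n) (Fin n) ℂ) :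
    (MinApprox ε W Wt → ComplexApprox (ε / (1 - ε / 2)) W Wt) ∧
    (ComplexApprox ε W Wt → MinApprox (ε / (1 - ε)) W Wt) := by
  exact ⟨fun h => h.complexApprox h0.le (by linarith), fun h => h.minApprox h0 h1⟩

end
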